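/- Let x be a sequence in which a primitive word u (u = v^k implies k = 1) occurs with bounded gaps and is a prefix of x, and let w be a return word to u in x. If wu = s·u^k·p where k ≥ 1, s is a proper suffix of u, and p is a proper prefix of u, then s and p are empty and w = u. -/

import Mathlib

open List Filter

namespace Cobham

variable {A B : Type*}

/-- The word `w` occurs in the sequence `x` at position `i`. -/
def OccursAt (x : ℕ → A) (w : List A) (i : ℕ) : Prop :=
  w = List.ofFn (fun j : Fin w.length => x (i + j))

/-- `w` is a prefix of the sequence `x`. -/
def PrefixSeq (w : List A) (x : ℕ → A) : Prop := OccursAt x w 0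

/-- `w` is a factor of the sequence `x`. -/
def IsFactor (x : ℕ → A) (w : List A) : Prop := ∃ i, OccursAt x w i

/-- `w` occurs infinitely often in `x`. -/
def OccursInfinitelyOften (x : ℕ → A) (w : List A) : Prop :=
  ∀ N, ∃ i, N ≤ i ∧ OccursAt x w i

/-- `w` occurs in `x` with bounded gaps. -/
def BoundedGaps (x : ℕ → A) (w : List A) : Prop :=
  ∃ g, ∀ N, ∃ i, N ≤ i ∧ i ≤ N + g ∧ OccursAt x w i

/-- `x` is ultimately periodic. -/
def UltimatelyPeriodic (x : ℕ → A) : Prop :=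
  ∃ N p, 0 < p ∧ ∀ n, N ≤ n → x (n + p) = x n

/-- The `k`-fold concatenation `v^k` of a word with itself. -/
def wpow (v : List A) (k : ℕ) : List A := (List.replicate k v).flatten

/-- `u` is a primitive word: `u = v^k` implies `k = 1`. -/
def IsPrimitiveWord (u : List A) : Prop := ∀ (v : List A) (k : ℕ), u = wpow v k → k = 1

/-- Number of occurrences of the word `u` in the word `z`. -/
def occCount [DecidableEq A] (z u : List A) : ℕ :=
  ((List.range (z.length + 1)).filter (fun i => u.isPrefixOf (z.drop i))).length

/-- `w` is a return word to `u` in `x`. -/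
def IsReturnWord [DecidableEq A] (x : ℕ → A) (u w : List A) : Prop :=
  IsFactor x (w ++ u) ∧ u <+: (w ++ u) ∧ occCount (w ++ u) u = 2

/-- Extension of a morphism (given on letters) to words, by concatenation. -/
def mapWord (σ : A → List B) (w : List A) : List B := w.flatMap σ

/-- `x` is linearly recurrent with constant `L`. -/
def LinearlyRecurrent [DecidableEq A] (x : ℕ → A) (L : ℝ) : Prop :=
  (∀ w, IsFactor x w → BoundedGaps x w) ∧
    ∀ u w, IsFactor x u → IsReturnWord x u w → (w.length : ℝ) ≤ L * u.length

lemma wpow_zero (v : List A) : wpow v 0 = [] := rfl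

lemma wpow_one (v : List A) : wpow v 1 = v := by simp [wpow]

lemma wpow_succ (v : List A) (n : ℕ) : wpow v (n + 1) = v ++ wpow v n := by
  simp [wpow, List.replicate_succ]

lemma wpow_add (v : List A) (m n : ℕ) : wpow v (m + n) = wpow v m ++ wpow v n := by
  induction m with
  | zero => simp [wpow_zero]
  | succ m ih => rw [Nat.succ_add, wpow_succ, ih, wpow_succ, List.append_assoc]

lemma length_wpow (v : List A) (n : ℕ) : (wpow v n).length = n * v.length := by
  simp [wpow, mul_comm]

lemma comm_pow : ∀ (N : ℕ) (a b : List A), a.length + b.length ≤ N → a ++ b = b ++ a →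
    ∃ (t : List A) (m n : ℕ), a = wpow t m ∧ b = wpow t n := by
  intro N
  induction N with
  | zero =>
    intro a b hlen _
    have ha : a = [] := List.length_eq_zero_iff.mp (by omega)
    have hb : b = [] := List.length_eq_zero_iff.mp (by omega)
    exact ⟨[], 0, 0, by simp [ha, wpow_zero], by simp [hb, wpow_zero]⟩
  | succ N ih =>
    intro a b hlen h
    rcases eq_or_ne a [] with ha | ha
    · exact ⟨b, 0, 1, by simp [ha, wpow_zero], by simp [wpow_one]⟩
    rcases eq_or_ne b [] with hb | hb
    · exact ⟨a, 1, 0, by simp [wpow_one], by simp [hb, wpow_zero]⟩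
    have hal : 0 < a.length := List.length_pos_iff.mpr ha
    have hbl : 0 < b.length := List.length_pos_iff.mpr hb
    rcases le_total a.length b.length with hab | hab
    · have hpre : a <+: b := by
        have h1 : a <+: b ++ a := h ▸ List.prefix_append a b
        exact List.prefix_of_prefix_length_le h1 (List.prefix_append b a) hab
      obtain ⟨c, hc⟩ := hpre
      have hac : a ++ c = c ++ a := by
        apply List.append_cancel_left (as := a)
        have h2 : a ++ (a ++ c) = (a ++ c) ++ a := by rw [hc]; exact h
        simpa [List.append_assoc] using h2
      have hlen' : a.length + c.length ≤ N := by
        have := congrArg List.length hc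
        simp [List.length_append] at this
        omega
      obtain ⟨t, m, n, hA, hC⟩ := ih a c hlen' hac
      exact ⟨t, m, m + n, hA, by rw [← hc, hA, hC, ← wpow_add]⟩
    · have hpre : b <+: a := by
        have h1 : b <+: a ++ b := h.symm ▸ List.prefix_append b a
        exact List.prefix_of_prefix_length_le h1 (List.prefix_append a b) hab
      obtain ⟨c, hc⟩ := hpre
      have hbc : b ++ c = c ++ b := by
        apply List.append_cancel_left (as := b)
        have h2 : b ++ (b ++ c) = (b ++ c) ++ b := by rw [hc]; exact h.symm
        simpa [List.append_assoc] using h2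
      have hlen' : b.length + c.length ≤ N := by
        have := congrArg List.length hc
        simp [List.length_append] at this
        omega
      obtain ⟨t, m, n, hB, hC⟩ := ih b c hlen' hbc
      exact ⟨t, m + n, m, by rw [← hc, hB, hC, ← wpow_add], hB⟩

lemma eq_nil_of_comm_primitive (u a : List A) (hprim : IsPrimitiveWord u)
    (hcomm : a ++ u = u ++ a) (hlen : a.length < u.length) : a = [] := by
  obtain ⟨t, m, n, hA, hU⟩ := comm_pow (a.length + u.length) a u le_rfl hcomm
  have hn : n = 1 := hprim t n hU
  subst hn
  rw [wpow_one] at hU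
  subst hU
  have h1 : a.length = m * u.length := by rw [hA, length_wpow]
  have hm : m = 0 := by
    by_contra hm0
    have h2 : u.length ≤ m * u.length := Nat.le_mul_of_pos_left _ (by omega)
    omega
  rw [hA, hm, wpow_zero]


lemma three_le_occCount [DecidableEq A] (z u : List A) {i₁ i₂ i₃ : ℕ}
    (h12 : i₁ < i₂) (h23 : i₂ < i₃) (h3 : i₃ ≤ z.length)
    (o1 : u <+: z.drop i₁) (o2 : u <+: z.drop i₂) (o3 : u <+: z.drop i₃) :
    3 ≤ occCount z u := by
  set l := (List.range (z.length + 1)).filter (fun i => u.isPrefixOf (z.drop i)) with hl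
  have hnd : l.Nodup := List.nodup_range.filter _
  have hmem : ∀ i, i ≤ z.length → u <+: z.drop i → i ∈ l := by
    intro i hi ho
    rw [hl, List.mem_filter, List.mem_range]
    exact ⟨by omega, by simpa [List.isPrefixOf_iff_prefix] using ho⟩
  have h1 := hmem i₁ (by omega) o1
  have h2 := hmem i₂ (by omega) o2
  have h3' := hmem i₃ h3 o3
  have hsub : ({i₁, i₂, i₃} : Finset ℕ) ⊆ l.toFinset := by
    intro a ha
    simp only [Finset.mem_insert, Finset.mem_singleton] at ha
    rcases ha with rfl | rfl | rfl <;> simpa [List.mem_toFinset]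
  have hcard : ({i₁, i₂, i₃} : Finset ℕ).card = 3 := by
    rw [Finset.card_insert_of_notMem (by simp; omega),
      Finset.card_insert_of_notMem (by simp; omega), Finset.card_singleton]
  calc 3 = ({i₁, i₂, i₃} : Finset ℕ).card := hcard.symm
    _ ≤ l.toFinset.card := Finset.card_le_card hsub
    _ = l.length := List.toFinset_card_of_nodup hnd

lemma occCount_self_le [DecidableEq A] (u : List A) (hu : u ≠ []) : occCount u u ≤ 1 := by
  set l := (List.range (u.length + 1)).filter (fun i => u.isPrefixOf (u.drop i)) with hl
  have hnd : l.Nodup := List.nodup_range.filter _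
  have hz : ∀ i ∈ l, i = 0 := by
    intro i hi
    rw [hl, List.mem_filter, List.mem_range, List.isPrefixOf_iff_prefix] at hi
    have := hi.2.length_le
    rw [List.length_drop] at this
    have hul : 0 < u.length := List.length_pos_iff.mpr hu
    omega
  have hsub : l.toFinset ⊆ {0} := by
    intro a ha
    rw [List.mem_toFinset] at ha
    simp [hz a ha]
  calc occCount u u = l.length := rfl
    _ = l.toFinset.card := (List.toFinset_card_of_nodup hnd).symm
    _ ≤ ({0} : Finset ℕ).card := Finset.card_le_card hsub
    _ = 1 := Finset.card_singleton 0

theorem return_word_to_primitive_word_is_the_word {A : Type*} [Fintype A] [DecidableEq A]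
    (x : ℕ → A) (u : List A) (hprim : IsPrimitiveWord u)
    (hbg : BoundedGaps x u) (hpref : PrefixSeq u x)
    (w : List A) (hrw : IsReturnWord x u w)
    (k : ℕ) (hk : 1 ≤ k) (s p : List A)
    (hs : s <:+ u ∧ s ≠ u) (hp : p <+: u ∧ p ≠ u)
    (heq : w ++ u = s ++ wpow u k ++ p) :
    s = [] ∧ p = [] ∧ w = u := by
  obtain ⟨hs1, hs2⟩ := hs
  obtain ⟨hp1, hp2⟩ := hp
  have hu : u ≠ [] := by
    rintro rfl
    exact hp2 (List.prefix_nil.mp hp1)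
  have hun : 0 < u.length := List.length_pos_iff.mpr hu
  obtain ⟨_, hupre, hocc⟩ := hrw
  have hslt : s.length < u.length :=
    lt_of_le_of_ne hs1.length_le (fun h => hs2 (hs1.eq_of_length h))
  have hplt : p.length < u.length :=
    lt_of_le_of_ne hp1.length_le (fun h => hp2 (hp1.eq_of_length h))
  have hM1 : u.length ≤ (wpow u k).length := by
    rw [length_wpow]; exact Nat.le_mul_of_pos_left _ (by omega)
  have hlenz : w.length + u.length = s.length + (wpow u k).length + p.length := by
    have := congrArg List.length heq
    simp only [List.length_append] at this
    omega
  have o1 : u <+: (w ++ u).drop 0 := by simpa using hupre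
  have oend : u <+: (w ++ u).drop w.length := by
    rw [List.drop_left]
  have key3 : ∀ i₂ i₃ : ℕ, 0 < i₂ → i₂ < i₃ → i₃ ≤ (w ++ u).length →
      u <+: (w ++ u).drop i₂ → u <+: (w ++ u).drop i₃ → False := by
    intro i₂ i₃ h2 h23 h3 o2 o3
    have := three_le_occCount (w ++ u) u h2 h23 h3 o1 o2 o3
    omega
  have hsnil : s = [] := by
    by_contra hs0
    have hsl : 0 < s.length := List.length_pos_iff.mpr hs0
    have o2 : u <+: (w ++ u).drop s.length := by
      rw [heq, List.append_assoc, List.drop_left]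
      obtain ⟨k', rfl⟩ : ∃ k', k = k' + 1 := ⟨k - 1, by omega⟩
      rw [wpow_succ, List.append_assoc]
      exact List.prefix_append u _
    rcases Nat.lt_or_ge k 2 with hk2 | hk2
    · have hk1 : k = 1 := by omega
      subst hk1
      have hw1 : (wpow u 1).length = u.length := by rw [wpow_one]
      rcases eq_or_ne p [] with rfl | hp0
      · have hz : w ++ u = s ++ u := by simpa [wpow_one] using heq
        obtain ⟨t, ht⟩ := hupre
        have ht' : u ++ t = s ++ u := by rw [ht, hz]
        have hlt : t.length = s.length := by
          have := congrArg List.length ht'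
          simp only [List.length_append] at this
          omega
        have hts : t = s := by
          have h1 : t <:+ s ++ u := by rw [← ht']; exact List.suffix_append u t
          have h2 : s <:+ s ++ u := hs1.trans (List.suffix_append s u)
          exact List.IsSuffix.eq_of_length
            (List.suffix_of_suffix_length_le h1 h2 (by omega)) (by omega)
        have hcomm : s ++ u = u ++ s := by rw [← ht', hts]
        exact hs0 (eq_nil_of_comm_primitive u s hprim hcomm hslt)
      · have hpl : 0 < p.length := List.length_pos_iff.mpr hp0
        exact key3 s.length w.length hsl (by omega)
          (by rw [List.length_append]; omega) o2 oend
    · have hM2 : 2 * u.length ≤ (wpow u k).length := by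
        rw [length_wpow]; exact Nat.mul_le_mul_right _ hk2
      have o3 : u <+: (w ++ u).drop (s.length + u.length) := by
        obtain ⟨k', rfl⟩ : ∃ k', k = k' + 2 := ⟨k - 2, by omega⟩
        rw [heq]
        rw [show s ++ wpow u (k' + 2) ++ p = (s ++ u) ++ (u ++ (wpow u k' ++ p)) by
          rw [show k' + 2 = 1 + (1 + k') from by ring, wpow_add, wpow_add, wpow_one]
          simp [List.append_assoc]]
        rw [List.drop_left' (by simp)]
        exact List.prefix_append u _
      exact key3 s.length (s.length + u.length) hsl (by omega)
        (by rw [List.length_append]; omega) o2 o3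
  subst hsnil
  simp only [List.nil_append] at heq
  simp only [List.length_nil] at hlenz
  rcases Nat.lt_or_ge k 2 with hk2 | hk2
  · have hk1 : k = 1 := by omega
    subst hk1
    rw [wpow_one] at heq
    have hw1 : (wpow u 1).length = u.length := by rw [wpow_one]
    rcases eq_or_ne p [] with rfl | hp0
    · have hw : w = [] := by
        have := congrArg List.length heq
        simp only [List.length_append, List.length_nil] at this
        exact List.length_eq_zero_iff.mp (by omega)
      rw [hw] at hocc
      simp only [List.nil_append] at hocc
      have := occCount_self_le u hu
      exact absurd hocc (by omega)
    · have hpl : 0 < p.length := List.length_pos_iff.mpr hp0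
      have hwp : w.length = p.length := by omega
      obtain ⟨q, hq⟩ := hp1
      have hw : w = p := by
        have h1 : (w ++ u).take w.length = w := List.take_left
        have h2 : (u ++ p).take p.length = p := by
          rw [← hq, List.append_assoc]
          exact List.take_left' rfl
        rw [heq, hwp, h2] at h1
        exact h1.symm
      rw [hw] at heq
      exact absurd (eq_nil_of_comm_primitive u p hprim heq hplt) hp0
  · have hM2 : 2 * u.length ≤ (wpow u k).length := by
      rw [length_wpow]; exact Nat.mul_le_mul_right _ hk2
    have o2 : u <+: (w ++ u).drop u.length := by
      obtain ⟨k', rfl⟩ : ∃ k', k = k' + 1 := ⟨k - 1, by omega⟩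
      rw [heq, wpow_succ, List.append_assoc, List.drop_left]
      obtain ⟨k'', rfl⟩ : ∃ k'', k' = k'' + 1 := ⟨k' - 1, by omega⟩
      rw [wpow_succ, List.append_assoc]
      exact List.prefix_append u _
    rcases eq_or_ne p [] with rfl | hp0
    · rcases Nat.lt_or_ge k 3 with hk3 | hk3
      · have hk2' : k = 2 := by omega
        subst hk2'
        have hpow2 : wpow u 2 = u ++ u := by
          rw [show (2 : ℕ) = 1 + 1 from rfl, wpow_add, wpow_one]
        rw [hpow2] at heq
        simp only [List.append_nil] at heq
        exact ⟨rfl, rfl, List.append_cancel_right heq⟩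
      · have hM3 : 3 * u.length ≤ (wpow u k).length := by
          rw [length_wpow]; exact Nat.mul_le_mul_right _ hk3
        have o3 : u <+: (w ++ u).drop (u.length + u.length) := by
          obtain ⟨k', rfl⟩ : ∃ k', k = k' + 3 := ⟨k - 3, by omega⟩
          rw [heq]
          rw [show wpow u (k' + 3) ++ ([] : List A) = (u ++ u) ++ (u ++ wpow u k') by
            rw [show k' + 3 = 1 + (1 + (1 + k')) from by ring, wpow_add, wpow_add,
              wpow_add, wpow_one]
            simp [List.append_assoc]]
          rw [List.drop_left' (by simp)]
          exact List.prefix_append u _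
        exact (key3 u.length (u.length + u.length) hun (by omega)
          (by rw [List.length_append]; omega) o2 o3).elim
    · have hpl : 0 < p.length := List.length_pos_iff.mpr hp0
      exact (key3 u.length w.length hun (by omega)
        (by rw [List.length_append]; omega) o2 oend).elim

end Cobham
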